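/- Let X be a non-empty set, f : X → X a self-map, and x₀ ∈ X a point with f(x₀) ≠ x₀. Suppose f⁻²(x₀) is an infinite set and f⁻¹(x) is a finite set for every x ∈ X with x ≠ x₀. Then f has no iterative root of any order n ≥ 2; that is, for every n ≥ 2 there is no map g : X → X with gⁿ = f. -/
import Mathlib


/-- **(C2) of Theorem 2 (the tool).** If `f : X → X` satisfies `f x₀ ≠ x₀`,
`f⁻²(x₀)` is infinite and `f⁻¹(x)` is finite for all `x ≠ x₀`, then `f` has no
iterative root of any order `n ≥ 2`. -/
theorem no_iterative_root_of_infinite_preimage {X : Type*} [Nonempty X]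
    (f : X → X) (x₀ : X) (hx₀ : f x₀ ≠ x₀)
    (h2 : ((fun y => f (f y)) ⁻¹' {x₀}).Infinite)
    (h1 : ∀ x : X, x ≠ x₀ → (f ⁻¹' {x}).Finite) :
    ∀ n : ℕ, 2 ≤ n → ¬ ∃ g : X → X, g^[n] = f := by
  rintro n hn ⟨g, hg⟩
  have hgn : ∀ y, g^[n] y = f y := fun y => congrFun hg y
  --若 g x₀ = x₀ 则矛盾
  have hgfix : g x₀ ≠ x₀ := by
    intro h
    exact hx₀ (by rw [← hgn x₀]; exact Function.iterate_fixed h n)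
  -- 纤维引理：g^[s] 在 w 处的纤维无穷 ⇒ g^[n-s] w = x₀
  have L3 : ∀ s : ℕ, s ≤ n → ∀ w : X, ((g^[s]) ⁻¹' {w}).Infinite → g^[n - s] w = x₀ := by
    intro s hs w hw
    by_contra hne
    refine hw ((h1 _ hne).subset ?_)
    intro y hy
    simp only [Set.mem_preimage, Set.mem_singleton_iff] at hy ⊢
    calc f y = g^[n] y := (hgn y).symm
      _ = g^[n - s] (g^[s] y) := by
          rw [← Function.iterate_add_apply]
          congr 1
          omega
      _ = g^[n - s] w := by rw [hy]
  -- 覆盖引理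
  have cov : ∀ a s : ℕ, 1 ≤ s → s ≤ n →
      ((g^[a + s]) ⁻¹' {x₀}).Infinite → ((g^[a]) ⁻¹' {x₀}).Finite →
      ∃ w, g^[a] w = x₀ ∧ g^[n - s] w = x₀ := by
    intro a s _ hsn hinf hfin
    by_contra hno
    push_neg at hno
    have hfib : ∀ w ∈ (g^[a]) ⁻¹' {x₀}, ((g^[s]) ⁻¹' {w}).Finite := by
      intro w hw
      by_contra hinf'
      exact hno w (by simpa using hw) (L3 s hsn w hinf')
    have hsub : (g^[a + s]) ⁻¹' {x₀} ⊆ ⋃ w ∈ (g^[a]) ⁻¹' {x₀}, (g^[s]) ⁻¹' {w} := by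
      intro y hy
      simp only [Set.mem_preimage, Set.mem_singleton_iff] at hy
      refine Set.mem_biUnion (show g^[s] y ∈ (g^[a]) ⁻¹' {x₀} from ?_) rfl
      simp only [Set.mem_preimage, Set.mem_singleton_iff]
      rw [← Function.iterate_add_apply]
      exact hy
    exact hinf ((hfin.biUnion hfib).subset hsub)
  -- A_{2n} 无穷
  have h2n : ((g^[n + n]) ⁻¹' {x₀}).Infinite := by
    have hEq : (g^[n + n]) ⁻¹' {x₀} = (fun y => f (f y)) ⁻¹' {x₀} := by
      ext y
      simp only [Set.mem_preimage, Set.mem_singleton_iff, Function.iterate_add_apply, hgn]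
    rw [hEq]
    exact h2
  -- A_{n+1} 无穷
  have hAn1 : ((g^[n + 1]) ⁻¹' {x₀}).Infinite := by
    by_contra hfin
    rw [Set.not_infinite] at hfin
    obtain ⟨w, hw1, hw2⟩ := cov (n + 1) (n - 1) (by omega) (by omega)
      (by rw [show (n + 1) + (n - 1) = n + n by omega]; exact h2n) hfin
    rw [show n - (n - 1) = 1 by omega] at hw2
    apply hx₀
    calc f x₀ = g^[n] x₀ := (hgn x₀).symm
      _ = g^[n] (g^[1] w) := by rw [hw2]
      _ = g^[n + 1] w := (Function.iterate_add_apply g n 1 w).symm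
      _ = x₀ := hw1
  -- A_1 无穷
  have hA1 : ((g^[1]) ⁻¹' {x₀}).Infinite := by
    by_contra hfin
    rw [Set.not_infinite] at hfin
    obtain ⟨w, hw1, hw2⟩ := cov 1 n (by omega) le_rfl
      (by rw [show 1 + n = n + 1 by omega]; exact hAn1) hfin
    rw [show n - n = 0 by omega] at hw2
    simp only [Function.iterate_zero, id] at hw2
    subst hw2
    simp only [Function.iterate_one] at hw1
    exact hgfix hw1
  -- A_2 无穷
  have hA2 : ((g^[2]) ⁻¹' {x₀}).Infinite := by
    by_contra hfin
    rw [Set.not_infinite] at hfin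
    obtain ⟨w, hw1, hw2⟩ := cov 2 (n - 1) (by omega) (by omega)
      (by rw [show 2 + (n - 1) = n + 1 by omega]; exact hAn1) hfin
    rw [show n - (n - 1) = 1 by omega] at hw2
    simp only [Function.iterate_one] at hw2
    simp only [show (2 : ℕ) = 1 + 1 from rfl, Function.iterate_add_apply,
      Function.iterate_one] at hw1
    have hx : g x₀ = g (g w) := by rw [hw2]
    exact hgfix (hx.trans hw1)
  -- 收尾
  have e1 : g^[n - 1] x₀ = x₀ := L3 1 (by omega) x₀ hA1
  have e2 : g^[n - 2] x₀ = x₀ := L3 2 hn x₀ hA2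
  apply hgfix
  calc g x₀ = g (g^[n - 2] x₀) := by rw [e2]
    _ = g^[1 + (n - 2)] x₀ := by rw [Function.iterate_add_apply, Function.iterate_one]
    _ = g^[n - 1] x₀ := by congr 1; omega
    _ = x₀ := e1
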